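/- Let N, k be positive integers with 4k² < N, and ω = e^{2πi/N}. Let Π_1, Π_2 be partitions of {1,…,2k} with |Π_1| + |Π_2| > 2k. Then |⟨I_{Π_1}| F^{⊗k,k} |I_{Π_2}⟩| ≤ N^k |Π_1|!·|Π_2|! / √((N)_{|Π_1|} (N)_{|Π_2|}) ≤ 2·(2k)!/√N, where ⟨I_{Π_1}| F^{⊗k,k} |I_{Π_2}⟩ = (|I_{Π_1}|·|I_{Π_2}|)^{−1/2} N^{−k} Σ_{m∈I_{Π_1}, n∈I_{Π_2}} ω^{m·n}, m·n = Σ_{j=1}^k m_j n_j − Σ_{j=k+1}^{2k} m_j n_j, and (N)_m = N(N−1)⋯(N−m+1). -/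

import Mathlib

open scoped BigOperators Classical

/-- The number of blocks `|Π|` of the partition corresponding to `r`. -/
noncomputable def numBlocks {n : ℕ} (r : Setoid (Fin n)) : ℕ :=
  Nat.card (Quotient r)

/-- The Fourier transform `F = N^{-1/2} ∑_{m,n=1}^N ω^{mn} |m⟩⟨n|`, `ω = e^{2πi/N}`. -/
noncomputable def Fmat (N : ℕ) : Matrix (Fin N) (Fin N) ℂ :=
  fun i j => (Real.sqrt N : ℂ)⁻¹ *
    Complex.exp (2 * Real.pi * Complex.I * (((i : ℕ) + 1) * ((j : ℕ) + 1)) / N)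

/-- `F^{⊗k,k} = F^{⊗k} ⊗ (conj F)^{⊗k}` as a matrix on `(ℂ^N)^{⊗2k}`. -/
noncomputable def Fkk (N k : ℕ) : Matrix (Fin (2*k) → Fin N) (Fin (2*k) → Fin N) ℂ :=
  fun a b => ∏ j : Fin (2*k),
    if (j : ℕ) < k then Fmat N (a j) (b j) else (starRingEnd ℂ) (Fmat N (a j) (b j))

/-- The set `I_Π` of tuples whose equality pattern is exactly `r`. -/
def Iset (N n : ℕ) (r : Setoid (Fin n)) : Set (Fin n → Fin N) :=
  {v | ∀ i j : Fin n, v i = v j ↔ r i j}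

/-- The unit vector `|I_Π⟩ = |I_Π|^{-1/2} ∑_{n ∈ I_Π} |n⟩`. -/
noncomputable def ketI (N n : ℕ) (r : Setoid (Fin n)) : (Fin n → Fin N) → ℂ :=
  fun v => if v ∈ Iset N n r then ((Real.sqrt ((Iset N n r).ncard) : ℂ))⁻¹ else 0

/-- The matrix element `⟨I_{Π₁}| F^{⊗k,k} |I_{Π₂}⟩`. -/
noncomputable def matEltI (N k : ℕ) (r₁ r₂ : Setoid (Fin (2*k))) : ℂ :=
  ∑ a : Fin (2*k) → Fin N, ∑ b : Fin (2*k) → Fin N,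
    (starRingEnd ℂ) (ketI N (2*k) r₁ a) * Fkk N k a b * ketI N (2*k) r₂ b

/-!
Up to the factor `(|I_{Π₁}| |I_{Π₂}|)^{-1/2} N^{-k}`, the matrix element is the character sum
`S = ∑_{a ∈ I_{Π₁}, b ∈ I_{Π₂}} ψ(∑_j ±a_j b_j)`, `ψ` the standard additive character of `ZMod N`.
Writing `a` as an injective function `x` on the blocks of `Π₁`, the injectivity constraint is
removed by the signed sum over permutations `π` of the blocks:
`∑_{x injective} = ∑_π sign π ∑_{x ∘ π = x}`,
since the signs of the stabilizer of `x` cancel unless `x` is injective. For each `π` the sum over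
`x` runs freely over the functions on the cycles of `π`, so by orthogonality of `ψ` it is
`N^{#cycles}` times the indicator of `#cycles` independent linear conditions on `b`, which at most
`N^{2k - #cycles}` tuples `b` satisfy. Hence `|S| ≤ |Π₁|! N^{2k}`.

The second inequality is arithmetic: `|Π₁|! |Π₂|! ≤ (2k)! (2k)^e` with `e = |Π₁| + |Π₂| - 2k - 1`,
and `N^m ≤ 2 (N)_m` as soon as `m² ≤ N`.
-/

open Finset Function
open scoped Nat

lemma AddChar.map_sum_eq_prod {A M ι : Type*} [AddCommMonoid A] [CommMonoid M] (ψ : AddChar A M)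
    (s : Finset ι) (f : ι → A) : ψ (∑ i ∈ s, f i) = ∏ i ∈ s, ψ (f i) := by
  induction s using Finset.cons_induction with
  | empty => simp
  | cons i s hi ih => rw [sum_cons, prod_cons, map_add_eq_mul, ih]

namespace Equiv.Perm

variable {α β : Type*}

lemma comp_zpow_eq_self {π : Perm α} {x : α → β} (hx : x ∘ π = x) (i : ℤ) :
    x ∘ ⇑(π ^ i) = x := by
  have hinv : x ∘ ⇑π⁻¹ = x := by
    conv_lhs => rw [← hx]
    ext a; simp
  induction i using Int.induction_on with
  | zero => rfl
  | succ i ih => rw [zpow_add_one, coe_mul, ← comp_assoc, ih, hx]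
  | pred i ih => rw [zpow_sub_one, coe_mul, ← comp_assoc, ih, hinv]

def invariantFunEquiv (π : Perm α) (β : Type*) :
    {x : α → β // x ∘ π = x} ≃ (Quotient (SameCycle.setoid π) → β) where
  toFun x := Quotient.lift x.1 fun a b ⟨i, hi⟩ => by
    rw [← hi]; exact (congrFun (comp_zpow_eq_self x.2 i) a).symm
  invFun z := ⟨z ∘ Quotient.mk _, funext fun a => congrArg z (Quotient.sound ⟨-1, by simp⟩)⟩
  left_inv _ := rfl
  right_inv z := funext fun q => Quotient.inductionOn q fun _ => rfl

variable [Fintype α] [DecidableEq α]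

lemma sum_sign_filter_comp_eq_self (x : α → β) :
    ∑ π ∈ univ.filter (fun π : Perm α => x ∘ π = x), (sign π : ℤ) =
      if Injective x then 1 else 0 := by
  split_ifs with hx
  · have : univ.filter (fun π : Perm α => x ∘ π = x) = {1} := by
      ext π
      simp only [mem_filter, mem_univ, true_and, mem_singleton]
      exact ⟨fun h => Equiv.ext fun a => hx (congrFun h a), fun h => h ▸ rfl⟩
    simp [this]
  · obtain ⟨a, b, hxab, hab⟩ : ∃ a b, x a = x b ∧ a ≠ b := by
      simpa [Injective] using hx
    have hswap : x ∘ ⇑(swap a b) = x := by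
      ext c; simp only [comp_apply, swap_apply_def]; split_ifs <;> simp [*]
    -- left multiplication by `swap a b` permutes the stabilizer of `x` and flips every sign
    set S := ∑ π ∈ univ.filter (fun π : Perm α => x ∘ π = x), (sign π : ℤ)
    have : S = -S := by
      calc S = ∑ π ∈ univ.filter (fun π : Perm α => x ∘ π = x), (sign (swap a b * π) : ℤ) :=
            sum_nbij' (swap a b * ·) (swap a b * ·)
              (fun π hπ => by simpa [coe_mul, ← comp_assoc, hswap] using hπ)
              (fun π hπ => by simpa [coe_mul, ← comp_assoc, hswap] using hπ)
              (fun π _ => swap_mul_self_mul a b π) (fun π _ => swap_mul_self_mul a b π)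
              (fun π _ => by simp)
        _ = -S := by simp [sign_swap hab, S]
    omega

variable [Fintype β]

theorem sum_embedding_eq_sum_sign_smul {M : Type*} [AddCommGroup M] (F : (α → β) → M) :
    ∑ f : α ↪ β, F f =
      ∑ π : Perm α, sign π • ∑ z : Quotient (SameCycle.setoid π) → β, F (z ∘ Quotient.mk _) := by
  have hfixed (π : Perm α) : ∑ z : Quotient (SameCycle.setoid π) → β, F (z ∘ Quotient.mk _) =
      ∑ x ∈ univ.filter (fun x : α → β => x ∘ π = x), F x := by
    rw [sum_subtype _ (p := fun x : α → β => x ∘ π = x) (by simp)]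
    exact (Fintype.sum_equiv (invariantFunEquiv π β) _ _ fun _ => rfl).symm
  calc ∑ f : α ↪ β, F f = ∑ x : α → β, if Injective x then F x else 0 := by
        rw [← sum_filter, sum_subtype _ (p := Injective) (by simp)]
        exact (Fintype.sum_equiv (subtypeInjectiveEquivEmbedding α β) _ _ fun _ => rfl).symm
    _ = ∑ x : α → β, ∑ π ∈ univ.filter (fun π : Perm α => x ∘ π = x), (sign π : ℤ) • F x := by
        simp_rw [← sum_smul, sum_sign_filter_comp_eq_self, ite_smul, one_smul, zero_smul]
    _ = ∑ π : Perm α, sign π • ∑ x ∈ univ.filter (fun x : α → β => x ∘ π = x), F x := by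
        simp_rw [Units.smul_def, smul_sum, sum_filter]
        rw [sum_comm]
    _ = _ := by simp_rw [hfixed]

theorem norm_sum_embedding_le {E : Type*} [SeminormedAddCommGroup E] (F : (α → β) → E) {B : ℝ}
    (hB : ∀ π : Perm α,
      ‖∑ z : Quotient (SameCycle.setoid π) → β, F (z ∘ Quotient.mk _)‖ ≤ B) :
    ‖∑ f : α ↪ β, F f‖ ≤ (Fintype.card α)! * B := by
  rw [sum_embedding_eq_sum_sign_smul]
  calc _ ≤ ∑ π : Perm α, ‖sign π • ∑ z : Quotient (SameCycle.setoid π) → β,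
          F (z ∘ Quotient.mk _)‖ := norm_sum_le _ _
    _ ≤ ∑ _π : Perm α, B := sum_le_sum fun π _ => (norm_units_zsmul _ _).trans_le (hB π)
    _ = (Fintype.card α)! * B := by rw [sum_const, card_univ, Fintype.card_perm, nsmul_eq_mul]
end Equiv.Perm

section Characters

variable {A R J T : Type*} [CommRing R] [Fintype A] [Fintype J] [Fintype T] [DecidableEq T]

noncomputable def fiberSum (c : J → T) (v : J → R) (t : T) : R :=
  ∑ j ∈ univ.filter (fun j => c j = t), v j

lemma sum_addChar_fiberSum [Fintype R] {ψ : AddChar R ℂ} (hψ : ψ.IsPrimitive) (ℓ : A ≃ R)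
    (c : J → T) (v : J → R) :
    ∑ z : T → A, ψ (∑ j, ℓ (z (c j)) * v j) =
      if fiberSum c v = 0 then (Fintype.card R : ℂ) ^ Fintype.card T else 0 := by
  have hsplit (z : T → A) : ∑ j, ℓ (z (c j)) * v j = ∑ t, ℓ (z t) * fiberSum c v t := by
    rw [← sum_fiberwise univ c]
    refine sum_congr rfl fun t _ => ?_
    rw [fiberSum, mul_sum]
    exact sum_congr rfl fun j hj => by rw [(mem_filter.mp hj).2]
  have hchar (γ : R) : ∑ u : A, ψ (ℓ u * γ) = if γ = 0 then (Fintype.card R : ℂ) else 0 := by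
    rw [ℓ.sum_comp (fun x => ψ (x * γ)), AddChar.sum_mulShift γ hψ, Nat.cast_ite, Nat.cast_zero]
  calc _ = ∏ t, ∑ u : A, ψ (ℓ u * fiberSum c v t) := by
        simp_rw [hsplit, AddChar.map_sum_eq_prod]
        rw [prod_univ_sum, Fintype.piFinset_univ]
    _ = _ := by
        simp_rw [hchar, Fintype.prod_ite_zero, prod_const, card_univ, funext_iff, Pi.zero_apply]

lemma card_filter_fiberSum_eq_zero_le (ℓ : A ≃ R) (σ : J → Rˣ) {c : J → T}
    (hc : Surjective c) :
    #(univ.filter fun y : J → A => fiberSum c (fun j => σ j * ℓ (y j)) = 0) ≤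
      Fintype.card A ^ (Fintype.card J - Fintype.card T) := by
  obtain ⟨s, hs⟩ := hc.hasRightInverse
  set S := (univ.image s)ᶜ
  -- a solution `y` is determined by its values off the section `s`: on `s t` it is solved
  -- from the `t`-th equation, the only one in which `y (s t)` occurs with a unit coefficient
  have hinj : Set.InjOn (fun (y : J → A) (j : S) => y j)
      (univ.filter fun y : J → A => fiberSum c (fun j => σ j * ℓ (y j)) = 0) := by
    intro y₁ hy₁ y₂ hy₂ heq
    simp only [mem_coe, mem_filter, mem_univ, true_and] at hy₁ hy₂
    have hoff (j : J) (hj : j ∈ S) : y₁ j = y₂ j := congrFun heq ⟨j, hj⟩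
    ext1 j
    by_cases hj : j ∈ S
    · exact hoff j hj
    obtain ⟨t, rfl⟩ : ∃ t, s t = j := by simpa [S] using hj
    have h := congrFun (hy₁.trans hy₂.symm) t
    rw [fiberSum, fiberSum, ← sub_eq_zero, ← sum_sub_distrib,
      sum_eq_single_of_mem (s t) (by simp [hs t])] at h
    · rw [← mul_sub, Units.mul_right_eq_zero, sub_eq_zero] at h
      exact ℓ.injective h
    · intro j hj hne
      rw [hoff j ?_, sub_self]
      simp only [S, mem_compl, mem_image, mem_univ, true_and, not_exists]
      rintro t' rfl
      exact hne (congrArg s ((hs t').symm.trans (mem_filter.mp hj).2))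
  calc _ ≤ #(univ : Finset (S → A)) := card_le_card_of_injOn _ (fun _ _ => mem_univ _) hinj
    _ = Fintype.card A ^ (Fintype.card J - Fintype.card T) := by
      rw [card_univ, Fintype.card_fun, Fintype.card_coe, card_compl,
        card_image_of_injective _ hs.injective, card_univ]

theorem norm_sum_sum_addChar_le [Fintype R] {ψ : AddChar R ℂ} (hψ : ψ.IsPrimitive) (ℓ : A ≃ R)
    (σ : J → Rˣ) {c : J → T} (hc : Surjective c) (Y : Finset (J → A)) :
    ‖∑ y ∈ Y, ∑ z : T → A, ψ (∑ j, σ j * ℓ (z (c j)) * ℓ (y j))‖ ≤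
      (Fintype.card A : ℝ) ^ Fintype.card J := by
  have hR : Fintype.card R = Fintype.card A := (Fintype.card_congr ℓ).symm
  have hTJ : Fintype.card T ≤ Fintype.card J := Fintype.card_le_of_surjective c hc
  have hinner (y : J → A) : ‖∑ z : T → A, ψ (∑ j, σ j * ℓ (z (c j)) * ℓ (y j))‖ =
      if fiberSum c (fun j => σ j * ℓ (y j)) = 0 then (Fintype.card A : ℝ) ^ Fintype.card T
      else 0 := by
    have hphase (z : T → A) : ∑ j, σ j * ℓ (z (c j)) * ℓ (y j) =
        ∑ j, ℓ (z (c j)) * (σ j * ℓ (y j)) := sum_congr rfl fun _ _ => by ring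
    simp_rw [hphase]
    rw [sum_addChar_fiberSum hψ ℓ c, hR]
    split_ifs <;> simp
  calc _ ≤ ∑ y ∈ Y, ‖∑ z : T → A, ψ (∑ j, σ j * ℓ (z (c j)) * ℓ (y j))‖ := norm_sum_le _ _
    _ ≤ ∑ y : J → A, ‖∑ z : T → A, ψ (∑ j, σ j * ℓ (z (c j)) * ℓ (y j))‖ :=
        sum_le_sum_of_subset_of_nonneg (subset_univ Y) fun _ _ _ => norm_nonneg _
    _ = #(univ.filter fun y : J → A => fiberSum c (fun j => σ j * ℓ (y j)) = 0) *
          (Fintype.card A : ℝ) ^ Fintype.card T := by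
        simp_rw [hinner, ← sum_filter, sum_const, nsmul_eq_mul]
    _ ≤ (Fintype.card A : ℝ) ^ (Fintype.card J - Fintype.card T) *
          (Fintype.card A : ℝ) ^ Fintype.card T := by
        gcongr
        exact_mod_cast card_filter_fiberSum_eq_zero_le ℓ σ hc
    _ = (Fintype.card A : ℝ) ^ Fintype.card J := by
        rw [← pow_add, Nat.sub_add_cancel hTJ]

end Characters

lemma numBlocks_le {n : ℕ} (r : Setoid (Fin n)) : numBlocks r ≤ n := by
  simpa [numBlocks] using Nat.card_le_card_of_surjective (Quotient.mk r) Quotient.mk_surjective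

def isetEquivEmbedding (N n : ℕ) (r : Setoid (Fin n)) : Iset N n r ≃ (Quotient r ↪ Fin N) where
  toFun v := ⟨Quotient.lift v.1 fun i j => (v.2 i j).mpr, by
    rintro ⟨i⟩ ⟨j⟩ h
    exact Quotient.sound ((v.2 i j).mp h)⟩
  invFun f := ⟨f ∘ Quotient.mk r, fun i j => f.injective.eq_iff.trans Quotient.eq⟩
  left_inv _ := rfl
  right_inv f := by ext ⟨i⟩; rfl

lemma ncard_Iset (N n : ℕ) (r : Setoid (Fin n)) :
    (Iset N n r).ncard = N.descFactorial (numBlocks r) := by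
  rw [← Nat.card_coe_set_eq, Nat.card_congr (isetEquivEmbedding N n r), Nat.card_eq_fintype_card,
    Fintype.card_embedding_eq, Fintype.card_fin, numBlocks, Nat.card_eq_fintype_card]

lemma sum_filter_mem_Iset {M : Type*} [AddCommMonoid M] (N n : ℕ) (r : Setoid (Fin n))
    (g : (Fin n → Fin N) → M) :
    ∑ a ∈ univ.filter (· ∈ Iset N n r), g a = ∑ f : Quotient r ↪ Fin N, g (f ∘ Quotient.mk r) := by
  rw [sum_subtype _ (p := (· ∈ Iset N n r)) (by simp)]
  exact Fintype.sum_equiv (isetEquivEmbedding N n r) _ _ fun _ => rfl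

theorem norm_sum_Iset_sum_addChar_le {R : Type*} [CommRing R] [Fintype R] {ψ : AddChar R ℂ}
    (hψ : ψ.IsPrimitive) {N n : ℕ} (ℓ : Fin N ≃ R) (σ : Fin n → Rˣ) (r : Setoid (Fin n))
    (Y : Finset (Fin n → Fin N)) :
    ‖∑ a ∈ univ.filter (· ∈ Iset N n r), ∑ b ∈ Y, ψ (∑ j, σ j * ℓ (a j) * ℓ (b j))‖ ≤
      (numBlocks r)! * (N : ℝ) ^ n := by
  rw [sum_filter_mem_Iset, numBlocks, Nat.card_eq_fintype_card]
  refine Equiv.Perm.norm_sum_embedding_le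
    (fun x => ∑ b ∈ Y, ψ (∑ j, σ j * ℓ (x (Quotient.mk r j)) * ℓ (b j))) fun π => ?_
  rw [sum_comm]
  have hc : Surjective fun j => Quotient.mk (Equiv.Perm.SameCycle.setoid π) (Quotient.mk r j) :=
    Quotient.mk_surjective.comp Quotient.mk_surjective
  simpa using norm_sum_sum_addChar_le hψ ℓ σ hc Y

-- `Fmat` labels the basis vector `u : Fin N` by `u + 1 ∈ {1, …, N}`, used as an exponent mod `N`
noncomputable def labelEquiv (N : ℕ) [NeZero N] : Fin N ≃ ZMod N :=
  Equiv.ofBijective (fun u => ((u : ℕ) : ZMod N) + 1) <|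
    (Fintype.bijective_iff_injective_and_card _).mpr ⟨fun u v h => Fin.ext <| by
      simpa [ZMod.val_natCast_of_lt u.2, ZMod.val_natCast_of_lt v.2] using
        congrArg ZMod.val (add_right_cancel h), by simp⟩

lemma labelEquiv_apply (N : ℕ) [NeZero N] (u : Fin N) :
    labelEquiv N u = ((u : ℕ) : ZMod N) + 1 := rfl

def fourierSign (N k : ℕ) (j : Fin (2 * k)) : (ZMod N)ˣ := if (j : ℕ) < k then 1 else -1

noncomputable def fourierPhase (N k : ℕ) [NeZero N] (a b : Fin (2 * k) → Fin N) : ZMod N :=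
  ∑ j, (fourierSign N k j : ZMod N) * labelEquiv N (a j) * labelEquiv N (b j)

lemma Fkk_eq (N k : ℕ) [NeZero N] (a b : Fin (2 * k) → Fin N) :
    Fkk N k a b = ((N : ℂ) ^ k)⁻¹ * ZMod.stdAddChar (fourierPhase N k a b) := by
  have hlabel (j : Fin (2 * k)) : (labelEquiv N (a j) * labelEquiv N (b j) : ZMod N) =
      (((((a j : ℕ) + 1) * ((b j : ℕ) + 1) : ℕ) : ℤ) : ZMod N) := by
    simp [labelEquiv_apply]
  have hfactor (j : Fin (2 * k)) :
      (if (j : ℕ) < k then Fmat N (a j) (b j) else (starRingEnd ℂ) (Fmat N (a j) (b j))) =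
        (Real.sqrt N : ℂ)⁻¹ * ZMod.stdAddChar
          ((fourierSign N k j : ZMod N) * labelEquiv N (a j) * labelEquiv N (b j)) := by
    rw [mul_assoc, hlabel, fourierSign]
    split_ifs
    · rw [Units.val_one, one_mul, ZMod.stdAddChar_coe, Fmat]
      push_cast; ring_nf
    · rw [Units.val_neg, Units.val_one, neg_one_mul, ← Int.cast_neg, ZMod.stdAddChar_coe, Fmat,
        map_mul, map_inv₀, Complex.conj_ofReal, ← Complex.exp_conj]
      simp [map_ofNat]
  rw [Fkk, prod_congr rfl fun j _ => hfactor j, prod_mul_distrib, prod_const, card_univ,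
    Fintype.card_fin, fourierPhase, AddChar.map_sum_eq_prod, inv_pow, pow_mul, ← Complex.ofReal_pow,
    Real.sq_sqrt (Nat.cast_nonneg N)]
  push_cast; rfl

lemma matEltI_eq (N k : ℕ) [NeZero N] (r₁ r₂ : Setoid (Fin (2 * k))) :
    matEltI N k r₁ r₂ =
      (Real.sqrt (N.descFactorial (numBlocks r₁)) : ℂ)⁻¹ *
        (Real.sqrt (N.descFactorial (numBlocks r₂)) : ℂ)⁻¹ * ((N : ℂ) ^ k)⁻¹ *
        ∑ a ∈ univ.filter (· ∈ Iset N (2 * k) r₁), ∑ b ∈ univ.filter (· ∈ Iset N (2 * k) r₂),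
          ZMod.stdAddChar (fourierPhase N k a b) := by
  simp only [matEltI, ketI, ncard_Iset, Fkk_eq, apply_ite (starRingEnd ℂ), map_inv₀,
    Complex.conj_ofReal, map_zero, ite_mul, mul_ite, zero_mul, mul_zero, sum_filter, mul_sum]
  refine sum_congr rfl fun a _ => ?_
  split_ifs
  · exact sum_congr rfl fun b _ => by split_ifs <;> ring
  · simp

theorem norm_matEltI_le (N k : ℕ) [NeZero N] (r₁ r₂ : Setoid (Fin (2 * k))) :
    ‖matEltI N k r₁ r₂‖ ≤ (N : ℝ) ^ k * (numBlocks r₁)! /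
      Real.sqrt (N.descFactorial (numBlocks r₁) * N.descFactorial (numBlocks r₂)) := by
  have hS := norm_sum_Iset_sum_addChar_le (ZMod.isPrimitive_stdAddChar N) (labelEquiv N)
    (fourierSign N k) r₁ (univ.filter (· ∈ Iset N (2 * k) r₂))
  have hN : (N : ℝ) ^ k ≠ 0 := pow_ne_zero _ (Nat.cast_ne_zero.mpr (NeZero.ne N))
  rw [matEltI_eq, norm_mul, norm_mul, norm_mul, norm_inv, norm_inv, norm_inv, norm_pow,
    Complex.norm_real, Complex.norm_real, Complex.norm_natCast,
    Real.norm_of_nonneg (Real.sqrt_nonneg _), Real.norm_of_nonneg (Real.sqrt_nonneg _)]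
  calc _ ≤ (Real.sqrt (N.descFactorial (numBlocks r₁)))⁻¹ *
          (Real.sqrt (N.descFactorial (numBlocks r₂)))⁻¹ * ((N : ℝ) ^ k)⁻¹ *
            ((numBlocks r₁)! * N ^ (2 * k)) := by
        gcongr
        exact hS
    _ = _ := by
        rw [Real.sqrt_mul (Nat.cast_nonneg _), div_eq_mul_inv, mul_inv, pow_mul', sq]
        field_simp

lemma Nat.factorial_mul_factorial_succ_le {a : ℕ} (ha : 1 ≤ a) (b : ℕ) :
    a ! * (b + 1)! ≤ (a + b)! := by
  induction b with
  | zero => simp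
  | succ b ih =>
    calc a ! * (b + 2)! = (b + 2) * (a ! * (b + 1)!) := by rw [factorial_succ (b + 1)]; ring
      _ ≤ (a + b + 1) * (a + b)! := Nat.mul_le_mul (by omega) ih
      _ = (a + (b + 1))! := by rw [← add_assoc, factorial_succ]

lemma Nat.factorial_mul_factorial_le_factorial_mul_pow {n m₁ m₂ : ℕ} (h₁ : m₁ ≤ n)
    (h₂ : m₂ ≤ n) (hn : n < m₁ + m₂) :
    m₁ ! * m₂ ! ≤ n ! * n ^ (m₁ + m₂ - (n + 1)) := by
  obtain ⟨e, he⟩ : ∃ e, m₁ + m₂ = n + 1 + e := ⟨m₁ + m₂ - (n + 1), by omega⟩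
  rw [show m₁ + m₂ - (n + 1) = e by omega]
  have hm₂ : m₂ - e = n - m₁ + 1 := by omega
  calc m₁ ! * m₂ ! = m₁ ! * (n - m₁ + 1)! * m₂.descFactorial e := by
        rw [← hm₂, mul_assoc, factorial_mul_descFactorial (show e ≤ m₂ by omega)]
    _ ≤ n ! * n ^ e := by
        gcongr
        · simpa [Nat.add_sub_cancel' h₁] using
            factorial_mul_factorial_succ_le (a := m₁) (by omega) (n - m₁)
        · exact (descFactorial_le_pow m₂ e).trans (Nat.pow_le_pow_left h₂ e)

-- `∏_{i<m} (1 - i/N) ≥ 1 - ∑_{i<m} i/N`, cleared of denominators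
lemma Nat.pow_succ_le_mul_descFactorial_add (N : ℕ) :
    ∀ m ≤ N, N ^ (m + 1) ≤ N * N.descFactorial m + m.choose 2 * N ^ m := by
  intro m
  induction m with
  | zero => simp
  | succ m ih =>
    intro hm
    obtain ⟨t, ht⟩ : ∃ t, N - m = t + 1 := ⟨N - m - 1, by omega⟩
    have hN : N = m + (t + 1) := by omega
    have ih' := Nat.mul_le_mul_left (t + 1) (ih (by omega))
    rw [descFactorial_succ, choose_succ_succ', choose_one_right, ht]
    calc N ^ (m + 1 + 1) = m * N ^ (m + 1) + (t + 1) * N ^ (m + 1) := by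
          rw [pow_succ _ (m + 1), ← add_mul, ← hN, mul_comm]
      _ ≤ m * N ^ (m + 1) + (N * ((t + 1) * N.descFactorial m) + m.choose 2 * N ^ (m + 1)) := by
          have hC : (t + 1) * (m.choose 2 * N ^ m) ≤ m.choose 2 * N ^ (m + 1) := by
            calc (t + 1) * (m.choose 2 * N ^ m) ≤ N * (m.choose 2 * N ^ m) :=
                  Nat.mul_le_mul_right _ (by omega)
              _ = m.choose 2 * N ^ (m + 1) := by ring
          nlinarith [ih', hC]
      _ = _ := by ring

lemma Nat.pow_le_two_mul_descFactorial {N m : ℕ} (h : m ^ 2 ≤ N) :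
    N ^ m ≤ 2 * N.descFactorial m := by
  rcases Nat.eq_zero_or_pos N with rfl | hN
  · simp_all
  have hmN : m ≤ N := (Nat.le_self_pow two_ne_zero m).trans h
  have hchoose : 2 * m.choose 2 ≤ N :=
    calc 2 * m.choose 2 ≤ m * (m - 1) := by rw [choose_two_right]; exact Nat.mul_div_le _ 2
      _ ≤ m ^ 2 := by rw [sq]; exact Nat.mul_le_mul_left m (Nat.sub_le m 1)
      _ ≤ N := h
  have := pow_succ_le_mul_descFactorial_add N m hmN
  refine Nat.le_of_mul_le_mul_left ?_ hN
  rw [pow_succ] at this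
  nlinarith [Nat.mul_le_mul_right (N ^ m) hchoose]

lemma Nat.pow_mul_sq_factorial_le {N k m₁ m₂ : ℕ} (hN : 4 * k ^ 2 < N) (h₁ : m₁ ≤ 2 * k)
    (h₂ : m₂ ≤ 2 * k) (hk : 2 * k < m₁ + m₂) :
    N ^ (2 * k + 1) * (m₁ ! * m₂ !) ^ 2 ≤
      4 * (2 * k)! ^ 2 * (N.descFactorial m₁ * N.descFactorial m₂) := by
  obtain ⟨e, he⟩ : ∃ e, m₁ + m₂ = 2 * k + 1 + e := ⟨m₁ + m₂ - (2 * k + 1), by omega⟩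
  have hfact := factorial_mul_factorial_le_factorial_mul_pow h₁ h₂ hk
  rw [show m₁ + m₂ - (2 * k + 1) = e by omega] at hfact
  have hpow : ((2 * k) ^ e) ^ 2 ≤ N ^ e := by
    rw [← pow_mul, pow_mul']
    exact Nat.pow_le_pow_left (by nlinarith) e
  have hdesc {m : ℕ} (hm : m ≤ 2 * k) : N ^ m ≤ 2 * N.descFactorial m :=
    pow_le_two_mul_descFactorial (by nlinarith)
  calc N ^ (2 * k + 1) * (m₁ ! * m₂ !) ^ 2
      ≤ N ^ (2 * k + 1) * ((2 * k)! * (2 * k) ^ e) ^ 2 := by gcongr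
    _ = (2 * k)! ^ 2 * (N ^ (2 * k + 1) * ((2 * k) ^ e) ^ 2) := by ring
    _ ≤ (2 * k)! ^ 2 * (N ^ (2 * k + 1) * N ^ e) := by gcongr
    _ = (2 * k)! ^ 2 * (N ^ m₁ * N ^ m₂) := by rw [← pow_add, ← pow_add, he]
    _ ≤ (2 * k)! ^ 2 * ((2 * N.descFactorial m₁) * (2 * N.descFactorial m₂)) := by
        gcongr <;> exact hdesc ‹_›
    _ = 4 * (2 * k)! ^ 2 * (N.descFactorial m₁ * N.descFactorial m₂) := by ring

lemma div_sqrt_le_div_sqrt {a b c d : ℝ} (ha : 0 ≤ a) (hc : 0 ≤ c) (hb : 0 < b) (hd : 0 < d)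
    (h : a ^ 2 * d ≤ c ^ 2 * b) : a / Real.sqrt b ≤ c / Real.sqrt d := by
  rw [div_le_div_iff₀ (Real.sqrt_pos.mpr hb) (Real.sqrt_pos.mpr hd),
    ← pow_le_pow_iff_left₀ (by positivity) (by positivity) two_ne_zero, mul_pow, mul_pow,
    Real.sq_sqrt hd.le, Real.sq_sqrt hb.le]
  exact h

theorem pow_mul_factorial_div_sqrt_le {N k m₁ m₂ : ℕ} (hN : 4 * k ^ 2 < N) (h₁ : m₁ ≤ 2 * k)
    (h₂ : m₂ ≤ 2 * k) (hk : 2 * k < m₁ + m₂) :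
    (N : ℝ) ^ k * (m₁ ! : ℝ) * (m₂ ! : ℝ) /
        Real.sqrt ((N.descFactorial m₁ : ℝ) * (N.descFactorial m₂ : ℝ)) ≤
      2 * ((2 * k)! : ℝ) / Real.sqrt N := by
  have hdesc {m : ℕ} (hm : m ≤ 2 * k) : (0 : ℝ) < N.descFactorial m := by
    exact_mod_cast Nat.descFactorial_pos.mpr (by nlinarith)
  refine div_sqrt_le_div_sqrt (by positivity) (by positivity) (mul_pos (hdesc h₁) (hdesc h₂))
    (by exact_mod_cast (Nat.zero_le _).trans_lt hN) ?_
  have := (Nat.cast_le (α := ℝ)).mpr (Nat.pow_mul_sq_factorial_le hN h₁ h₂ hk)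
  push_cast at this
  linear_combination this

theorem stmt19_general (N k : ℕ) (hNk : 4*k^2 < N)
    (r₁ r₂ : Setoid (Fin (2*k)))
    (hgt : 2*k < numBlocks r₁ + numBlocks r₂) :
    ‖matEltI N k r₁ r₂‖ ≤
        (N : ℝ) ^ k * (Nat.factorial (numBlocks r₁)) * (Nat.factorial (numBlocks r₂)) /
          Real.sqrt ((N.descFactorial (numBlocks r₁)) * (N.descFactorial (numBlocks r₂))) ∧
      (N : ℝ) ^ k * (Nat.factorial (numBlocks r₁)) * (Nat.factorial (numBlocks r₂)) /
          Real.sqrt ((N.descFactorial (numBlocks r₁)) * (N.descFactorial (numBlocks r₂))) ≤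
        2 * (Nat.factorial (2*k)) / Real.sqrt N := by
  have : NeZero N := ⟨((Nat.zero_le _).trans_lt hNk).ne'⟩
  refine ⟨(norm_matEltI_le N k r₁ r₂).trans ?_,
    pow_mul_factorial_div_sqrt_le hNk (numBlocks_le r₁) (numBlocks_le r₂) hgt⟩
  refine div_le_div_of_nonneg_right (le_mul_of_one_le_right (by positivity) ?_) (Real.sqrt_nonneg _)
  exact_mod_cast (numBlocks r₂).factorial_pos

theorem stmt19 (N k : ℕ) (hN : 0 < N) (hk : 0 < k) (hNk : 4*k^2 < N)
    (r₁ r₂ : Setoid (Fin (2*k)))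
    (hgt : 2*k < numBlocks r₁ + numBlocks r₂) :
    ‖matEltI N k r₁ r₂‖ ≤
        (N : ℝ) ^ k * (Nat.factorial (numBlocks r₁)) * (Nat.factorial (numBlocks r₂)) /
          Real.sqrt ((N.descFactorial (numBlocks r₁)) * (N.descFactorial (numBlocks r₂))) ∧
      (N : ℝ) ^ k * (Nat.factorial (numBlocks r₁)) * (Nat.factorial (numBlocks r₂)) /
          Real.sqrt ((N.descFactorial (numBlocks r₁)) * (N.descFactorial (numBlocks r₂))) ≤
        2 * (Nat.factorial (2*k)) / Real.sqrt N :=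
  stmt19_general N k hNk r₁ r₂ hgt
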